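/- arXiv:1711.07337 — 2 statements merged into one kernel-verified Lean document; each statement's English description precedes it below -/
import Mathlib

section
/- For a nonnegative integer l, σ ∈ {0,1}, and real ρ > 0, one has C^ρ_{2l+σ}(z) = (Γ(ρ+2l+σ+1)/Γ(ρ)) · Σ_{m=0}^{l} (-1)^{m+l} Γ(ρ+l+m+σ) (2z)^σ / (m!·l!·(l-m)!·Γ(ρ+l+m+σ+1)) · ₂F₁(-m, -l; σ+1/2; z²). -/
open Finset

/-- Pochhammer (rising factorial) `(a)_k`. -/
noncomputable def poch (a : ℝ) (k : ℕ) : ℝ := ∏ i ∈ Finset.range k, (a + i)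

/-- Gegenbauer polynomial `C^ρ_n(z)`. -/
noncomputable def gegenbauer (ρ : ℝ) (n : ℕ) (z : ℝ) : ℝ :=
  ∑ k ∈ Finset.range (n / 2 + 1),
    (-1 : ℝ) ^ k * Real.Gamma (ρ + n - k) /
      (Real.Gamma ρ * k.factorial * (n - 2 * k).factorial) * (2 * z) ^ (n - 2 * k)

/-- Terminating Gauss hypergeometric series `₂F₁(-n, b; c; x)`. -/
noncomputable def F21fin (n : ℕ) (b c x : ℝ) : ℝ :=
  ∑ k ∈ Finset.range (n + 1),
    poch (-(n : ℝ)) k * poch b k / (poch c k * k.factorial) * x ^ k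

/-!
Expand each terminating `₂F₁` and interchange the two sums. Since `(-m)_j / m! = (-1)^j / (m-j)!`
and vanishes for `m < j`, the coefficient of `(2z)^(2j+σ)` reduces to the partial-fraction sum
`∑ᵢ (-1)^i / (i! (L-i)! (a+i)) = Γ(a) / Γ(a+L+1)`, which is `(-1)^L / L!` times the `L`-th forward
difference of `x ↦ x⁻¹`. Its denominator cancels the Gamma factor in front, and
`(σ+1/2)_j j! 4^j = (2j+σ)!` for `σ ∈ {0, 1}` leaves the term of `C^ρ_{2l+σ}` of degree `2j+σ`.
-/

open Real fwdDiff

lemma poch_eq_eval_ascPochhammer (a : ℝ) (k : ℕ) : poch a k = (ascPochhammer ℝ k).eval a := by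
  induction k with
  | zero => simp [poch]
  | succ k ih => rw [poch, prod_range_succ, ← poch, ih, ascPochhammer_succ_eval]

lemma poch_neg_natCast (m k : ℕ) : poch (-(m : ℝ)) k = (-1) ^ k * m.descFactorial k := by
  rw [poch_eq_eval_ascPochhammer, ascPochhammer_eval_neg_eq_descPochhammer,
    descPochhammer_eval_eq_descFactorial]

lemma poch_neg_natCast_div_factorial {m k : ℕ} (hkm : k ≤ m) :
    poch (-(m : ℝ)) k / m.factorial = (-1) ^ k / (m - k).factorial := by
  rw [poch_neg_natCast, ← Nat.factorial_mul_descFactorial hkm, Nat.cast_mul]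
  have : (m.descFactorial k : ℝ) ≠ 0 := by
    exact_mod_cast (Nat.descFactorial_pos.mpr hkm).ne'
  field_simp

lemma poch_add_half_mul_factorial {σ : ℕ} (hσ : σ ≤ 1) (j : ℕ) :
    poch ((σ : ℝ) + 1 / 2) j * j.factorial = (2 * j + σ).factorial / 4 ^ j := by
  rw [eq_div_iff (by positivity)]
  induction j with
  | zero => interval_cases σ <;> simp [poch]
  | succ j ih =>
    have hσσ : (σ : ℝ) * σ = σ := by interval_cases σ <;> norm_num
    rw [poch, prod_range_succ, ← poch, show 2 * (j + 1) + σ = 2 * j + σ + 1 + 1 by ring,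
      Nat.factorial_succ, Nat.factorial_succ, Nat.factorial_succ]
    push_cast
    linear_combination (4 * j + 4 * σ + 2) * (j + 1) * ih - (2 * j + σ).factorial * hσσ

lemma fwdDiff_iter_inv (L : ℕ) {x : ℝ} (hx : 0 < x) :
    (Δ_[1])^[L] (fun x : ℝ ↦ x⁻¹) x = (-1) ^ L * L.factorial * Gamma x / Gamma (x + L + 1) := by
  induction L generalizing x with
  | zero =>
    have hΓ := (Gamma_pos_of_pos hx).ne'
    simp only [Function.iterate_zero, id_eq, pow_zero, Nat.factorial_zero, Nat.cast_one, mul_one,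
      one_mul, CharP.cast_eq_zero, add_zero, Gamma_add_one hx.ne']
    field_simp
  | succ L ih =>
    have hΓ : Gamma (x + L + 1) ≠ 0 := (Gamma_pos_of_pos (by positivity)).ne'
    have hxL : x + L + 1 ≠ 0 := by positivity
    have hΓ_succ : Gamma (x + L + 1 + 1) = (x + L + 1) * Gamma (x + L + 1) := Gamma_add_one hxL
    rw [Function.iterate_succ_apply']
    simp only [fwdDiff]
    rw [ih hx, ih (by linarith : (0 : ℝ) < x + 1), Gamma_add_one hx.ne',
      show x + 1 + L + 1 = x + L + 1 + 1 by ring,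
      show x + ↑(L + 1) + 1 = x + L + 1 + 1 by push_cast; ring, hΓ_succ, Nat.factorial_succ]
    push_cast
    field_simp
    ring

lemma sum_neg_one_pow_div_factorial_mul_factorial (L : ℕ) {a : ℝ} (ha : 0 < a) :
    ∑ i ∈ range (L + 1), (-1 : ℝ) ^ i / (i.factorial * (L - i).factorial * (a + i)) =
      Gamma a / Gamma (a + L + 1) := by
  have hΔ := fwdDiff_iter_inv L ha
  rw [fwdDiff_iter_eq_sum_shift] at hΔ
  have hL : (L.factorial : ℝ) ≠ 0 := by positivity
  have hterm : ∀ i ∈ range (L + 1), (-1 : ℝ) ^ i / (i.factorial * (L - i).factorial * (a + i)) =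
      (-1) ^ L / L.factorial * (((-1 : ℤ) ^ (L - i) * L.choose i) • (a + i • (1 : ℝ))⁻¹) := by
    intro i hi
    have hiL : i ≤ L := mem_range_succ_iff.mp hi
    have hchoose : (L.choose i : ℝ) * i.factorial * (L - i).factorial = L.factorial := by
      exact_mod_cast Nat.choose_mul_factorial_mul_factorial hiL
    have hsign : (-1 : ℝ) ^ L = (-1) ^ i * (-1) ^ (L - i) := by
      rw [← pow_add, Nat.add_sub_cancel' hiL]
    have hai : a + i ≠ 0 := by positivity
    have hC : (L.choose i : ℝ) ≠ 0 := by exact_mod_cast (Nat.choose_pos hiL).ne'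
    rw [zsmul_eq_mul, nsmul_eq_mul, mul_one, hsign, ← hchoose]
    push_cast
    field_simp
    rw [← pow_mul, pow_mul', neg_one_sq, one_pow]
  rw [sum_congr rfl hterm, ← mul_sum, hΔ]
  have hΓ : Gamma a ≠ 0 := (Gamma_pos_of_pos ha).ne'
  field_simp
  rw [← pow_mul, pow_mul', neg_one_sq, one_pow]

lemma sum_neg_one_pow_mul_poch_neg_natCast {j l : ℕ} (hjl : j ≤ l) {b : ℝ} (hb : 0 < b) :
    ∑ m ∈ range (l + 1),
        (-1 : ℝ) ^ m * poch (-(m : ℝ)) j / (m.factorial * (l - m).factorial * (b + m)) =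
      Gamma (b + j) / Gamma (b + l + 1) := by
  obtain ⟨L, rfl⟩ := Nat.exists_eq_add_of_le hjl
  have hvanish : ∀ m ∈ range j,
      (-1 : ℝ) ^ m * poch (-(m : ℝ)) j / (m.factorial * (j + L - m).factorial * (b + m)) = 0 := by
    intro m hm
    rw [poch_neg_natCast, Nat.descFactorial_eq_zero_iff_lt.mpr (mem_range.mp hm)]
    simp
  rw [show j + L + 1 = j + (L + 1) by ring, sum_range_add, sum_eq_zero hvanish, zero_add]
  convert sum_neg_one_pow_div_factorial_mul_factorial L (a := b + j) (by positivity) using 1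
  · refine sum_congr rfl fun i _ ↦ ?_
    have hpoch := poch_neg_natCast_div_factorial (m := j + i) (k := j) (by omega)
    rw [Nat.add_sub_cancel_left] at hpoch
    have hsign : (-1 : ℝ) ^ j * (-1) ^ j = 1 := by
      rw [← pow_add, ← two_mul, pow_mul, neg_one_sq, one_pow]
    rw [Nat.add_sub_add_left, pow_add, mul_assoc, mul_div_assoc, mul_div_assoc,
      div_mul_eq_div_div, div_mul_eq_div_div, hpoch]
    push_cast
    field_simp
    linear_combination (b + j + i) * hsign
  · push_cast; ring_nf

lemma F21fin_eq_sum_range_of_le {m n : ℕ} (hmn : m ≤ n) (b c x : ℝ) :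
    F21fin m b c x = ∑ k ∈ range (n + 1),
      poch (-(m : ℝ)) k * poch b k / (poch c k * k.factorial) * x ^ k := by
  refine sum_subset (range_subset_range.mpr (by omega)) fun k _ hk ↦ ?_
  rw [poch_neg_natCast, Nat.descFactorial_eq_zero_iff_lt.mpr (by simpa using hk)]
  simp

lemma gegenbauer_two_mul_add (ρ : ℝ) (l σ : ℕ) (hσ : σ ≤ 1) (z : ℝ) :
    gegenbauer ρ (2 * l + σ) z = ∑ j ∈ range (l + 1),
      (-1 : ℝ) ^ (l - j) * Real.Gamma (ρ + l + j + σ) /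
        (Real.Gamma ρ * (l - j).factorial * (2 * j + σ).factorial) * (2 * z) ^ (2 * j + σ) := by
  rw [gegenbauer, show (2 * l + σ) / 2 + 1 = l + 1 by omega, ← sum_range_reflect]
  refine sum_congr rfl fun j hj ↦ ?_
  have hjl : j ≤ l := mem_range_succ_iff.mp hj
  rw [show l + 1 - 1 - j = l - j by omega, show 2 * l + σ - 2 * (l - j) = 2 * j + σ by omega]
  push_cast [Nat.cast_sub hjl]
  ring_nf

lemma sum_hypergeometric_term_eq_gegenbauer_term {j l σ : ℕ} (hjl : j ≤ l) (hσ : σ ≤ 1) {ρ : ℝ}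
    (hρ : 0 < ρ) (z : ℝ) :
    Gamma (ρ + 2 * l + σ + 1) / Gamma ρ * ∑ m ∈ range (l + 1),
        (-1 : ℝ) ^ (m + l) * Gamma (ρ + l + m + σ) * (2 * z) ^ σ /
          (m.factorial * l.factorial * (l - m).factorial * Gamma (ρ + l + m + σ + 1)) *
        (poch (-(m : ℝ)) j * poch (-(l : ℝ)) j / (poch ((σ : ℝ) + 1 / 2) j * j.factorial) *
          (z ^ 2) ^ j) =
      (-1 : ℝ) ^ (l - j) * Gamma (ρ + l + j + σ) /
        (Gamma ρ * (l - j).factorial * (2 * j + σ).factorial) * (2 * z) ^ (2 * j + σ) := by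
  set b := ρ + l + σ
  have hb : 0 < b := by positivity
  set K := (-1 : ℝ) ^ l * (2 * z) ^ σ * (poch (-(l : ℝ)) j / l.factorial) * (z ^ 2) ^ j /
    (poch ((σ : ℝ) + 1 / 2) j * j.factorial) with hK
  have hterm : ∀ m ∈ range (l + 1),
      (-1 : ℝ) ^ (m + l) * Gamma (ρ + l + m + σ) * (2 * z) ^ σ /
          (m.factorial * l.factorial * (l - m).factorial * Gamma (ρ + l + m + σ + 1)) *
        (poch (-(m : ℝ)) j * poch (-(l : ℝ)) j / (poch ((σ : ℝ) + 1 / 2) j * j.factorial) *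
          (z ^ 2) ^ j) =
      K * ((-1 : ℝ) ^ m * poch (-(m : ℝ)) j / (m.factorial * (l - m).factorial * (b + m))) := by
    intro m _
    have hbm : 0 < b + m := by positivity
    rw [show ρ + l + m + σ = b + m by ring, Gamma_add_one hbm.ne']
    have hΓ := (Gamma_pos_of_pos hbm).ne'
    rw [hK]
    field_simp
    ring
  rw [sum_congr rfl hterm, ← mul_sum, sum_neg_one_pow_mul_poch_neg_natCast hjl hb, hK,
    poch_neg_natCast_div_factorial hjl, poch_add_half_mul_factorial hσ,
    show b + l + 1 = ρ + 2 * l + σ + 1 by ring, show b + j = ρ + l + j + σ by ring]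
  have hsign : (-1 : ℝ) ^ l = (-1) ^ (l - j) * (-1) ^ j := by
    rw [← pow_add, Nat.sub_add_cancel hjl]
  have hpow : (2 * z) ^ (2 * j + σ) = (2 * z) ^ σ * 4 ^ j * (z ^ 2) ^ j := by
    rw [pow_add, pow_mul, show (2 * z) ^ 2 = 4 * z ^ 2 by ring, mul_pow]; ring
  have hΓ := (Gamma_pos_of_pos (show 0 < ρ + 2 * l + σ + 1 by positivity)).ne'
  rw [hsign, hpow]
  field_simp
  rw [← pow_mul, pow_mul', neg_one_sq, one_pow, one_mul]

theorem stmt1 (l σ : ℕ) (hσ : σ ≤ 1) (ρ : ℝ) (hρ : 0 < ρ) (z : ℝ) :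
    gegenbauer ρ (2 * l + σ) z =
      Real.Gamma (ρ + 2 * l + σ + 1) / Real.Gamma ρ *
        ∑ m ∈ Finset.range (l + 1),
          (-1 : ℝ) ^ (m + l) * Real.Gamma (ρ + l + m + σ) * (2 * z) ^ σ /
              (m.factorial * l.factorial * (l - m).factorial *
                Real.Gamma (ρ + l + m + σ + 1)) *
            F21fin m (-(l : ℝ)) ((σ : ℝ) + 1 / 2) (z ^ 2) := by
  rw [sum_congr rfl fun m hm ↦ by
    rw [F21fin_eq_sum_range_of_le (mem_range_succ_iff.mp hm), mul_sum], sum_comm,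
    mul_sum, gegenbauer_two_mul_add ρ l σ hσ z]
  exact sum_congr rfl fun j hj ↦
    (sum_hypergeometric_term_eq_gegenbauer_term (mem_range_succ_iff.mp hj) hσ hρ z).symm
end

section
/- For nonnegative integers l and m, a nonnegative integer n, σ ∈ {0,1}, and a parameter ν = M/2 - 1 with M ≥ 3 an integer, the sum Σ_{k1=0}^{∞} (-1)^{k1+n} (2k1+σ+M/2-1) Γ(M/2) Γ(M/2-1+k1+n+σ) / (Γ(l+1-k1) Γ(m+1-k1) Γ(k1+1-n) Γ(M/2+l+k1+σ) Γ(M/2+m+k1+σ)) equals Γ(M/2) / (Γ(l+1-n) Γ(m+1-n) Γ(M/2+l+m+σ)), where terms with a pole of Γ in the denominator (i.e., 1/Γ at a nonpositive integer) are interpreted as zero. -/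
open Finset

/-- Reciprocal Gamma recursion, valid for ALL real x. -/
lemma inv_gamma (x : ℝ) : (Real.Gamma x)⁻¹ = x * (Real.Gamma (x + 1))⁻¹ := by
  by_cases h : ∀ j : ℕ, x ≠ -j
  · have hx0 : x ≠ 0 := by simpa using h 0
    rw [Real.Gamma_add_one hx0, mul_inv, ← mul_assoc, mul_inv_cancel₀ hx0, one_mul]
  · push_neg at h
    obtain ⟨j, hj⟩ := h
    subst hj
    rw [Real.Gamma_neg_nat_eq_zero, inv_zero]
    cases j with
    | zero => simp
    | succ i =>
        have : (-(↑(i+1):ℝ)) + 1 = -(i:ℝ) := by push_cast; ring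
        rw [this, Real.Gamma_neg_nat_eq_zero, inv_zero, mul_zero]

lemma inv_gamma_nat_zero {p q : ℕ} (h : p < q) : (Real.Gamma ((p : ℝ) + 1 - q))⁻¹ = 0 := by
  have h1 : (p : ℝ) + 1 - q = -((q - (p + 1) : ℕ) : ℝ) := by
    rw [Nat.cast_sub h]
    push_cast; ring
  rw [h1, Real.Gamma_neg_nat_eq_zero, inv_zero]

noncomputable def tt (a : ℝ) (l m n k : ℕ) : ℝ :=
  (-1) ^ (k + n) * (2 * k + a) * Real.Gamma (a + k + n) *
    (Real.Gamma ((l : ℝ) + 1 - k) * Real.Gamma ((m : ℝ) + 1 - k) *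
        Real.Gamma ((k : ℝ) + 1 - n) *
        Real.Gamma (a + 1 + l + k) * Real.Gamma (a + 1 + m + k))⁻¹

noncomputable def gg (a : ℝ) (l m n k : ℕ) : ℝ :=
  -(-1) ^ (k + n) * Real.Gamma (a + k + n) *
    (Real.Gamma ((l : ℝ) + 1 - k) * Real.Gamma ((m : ℝ) + 2 - k) *
        Real.Gamma ((k : ℝ) - n) *
        Real.Gamma (a + l + k) * Real.Gamma (a + 1 + m + k))⁻¹

lemma tt_zero_left (a : ℝ) {l : ℕ} (m n : ℕ) {k : ℕ} (h : l < k) : tt a l m n k = 0 := by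
  simp [tt, mul_inv, inv_gamma_nat_zero h]

lemma tt_zero_right (a : ℝ) (l : ℕ) {m n k : ℕ} (h : m < k) : tt a l m n k = 0 := by
  simp [tt, mul_inv, inv_gamma_nat_zero h]

lemma tt_zero_lt (a : ℝ) (l m : ℕ) {n k : ℕ} (h : k < n) : tt a l m n k = 0 := by
  simp [tt, mul_inv, inv_gamma_nat_zero h]

/-- WZ certificate identity. -/
lemma cert (a : ℝ) (ha : 0 < a) (l m n k : ℕ) :
    ((m : ℝ) + 1 - n) * (a + 1 + l + m) * tt a l (m + 1) n k - tt a l m n k =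
      gg a l m n (k + 1) - gg a l m n k := by
  have hsign : ((-1 : ℝ)) ^ (k + 1 + n) = -(-1 : ℝ) ^ (k + n) := by
    rw [show k + 1 + n = (k + n) + 1 by ring, pow_succ]; ring
  have hA : Real.Gamma (a + ((k : ℝ) + 1) + ↑n) = (a + k + n) * Real.Gamma (a + k + n) := by
    rw [show (a + ((k : ℝ) + 1) + ↑n : ℝ) = (a + k + n) + 1 by ring]
    rw [Real.Gamma_add_one (by positivity)]
  have hP : (Real.Gamma ((l : ℝ) + 1 - ((k : ℝ) + 1)))⁻¹ =
      ((l : ℝ) - k) * (Real.Gamma ((l : ℝ) + 1 - k))⁻¹ := by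
    rw [show ((l : ℝ) + 1 - ((k : ℝ) + 1)) = (l : ℝ) - k by ring, inv_gamma,
      show ((l : ℝ) - k + 1) = (l : ℝ) + 1 - k by ring]
  have hQ : (Real.Gamma ((m : ℝ) + 1 - k))⁻¹ =
      ((m : ℝ) + 1 - k) * (Real.Gamma ((m : ℝ) + 2 - k))⁻¹ := by
    rw [inv_gamma, show ((m : ℝ) + 1 - k + 1) = (m : ℝ) + 2 - k by ring]
  have hQ1 : (Real.Gamma ((m : ℝ) + 2 - ((k : ℝ) + 1)))⁻¹ =
      ((m : ℝ) + 1 - k) * (Real.Gamma ((m : ℝ) + 2 - k))⁻¹ := by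
    rw [show ((m : ℝ) + 2 - ((k : ℝ) + 1)) = (m : ℝ) + 1 - k by ring, hQ]
  have hQ2 : (Real.Gamma ((m : ℝ) + 1 + 1 - k))⁻¹ =
      (Real.Gamma ((m : ℝ) + 2 - k))⁻¹ := by
    rw [show ((m : ℝ) + 1 + 1 - k) = (m : ℝ) + 2 - k by ring]
  have hR : (Real.Gamma ((k : ℝ) - n))⁻¹ =
      ((k : ℝ) - n) * (Real.Gamma ((k : ℝ) + 1 - n))⁻¹ := by
    rw [inv_gamma, show ((k : ℝ) - n + 1) = (k : ℝ) + 1 - n by ring]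
  have hB : (Real.Gamma (a + (l : ℝ) + k))⁻¹ =
      (a + l + k) * (Real.Gamma (a + 1 + l + k))⁻¹ := by
    rw [inv_gamma, show (a + (l : ℝ) + k + 1 : ℝ) = a + 1 + l + k by ring]
  have hB1 : (Real.Gamma (a + (l : ℝ) + ((k : ℝ) + 1)))⁻¹ = (Real.Gamma (a + 1 + l + k))⁻¹ := by
    rw [show (a + (l : ℝ) + ((k : ℝ) + 1) : ℝ) = a + 1 + l + k by ring]
  have hC : (Real.Gamma (a + 1 + (m : ℝ) + k))⁻¹ =
      (a + 1 + m + k) * (Real.Gamma (a + 2 + m + k))⁻¹ := by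
    rw [inv_gamma, show (a + 1 + (m : ℝ) + k + 1 : ℝ) = a + 2 + m + k by ring]
  have hC1 : (Real.Gamma (a + 1 + (m : ℝ) + ((k : ℝ) + 1)))⁻¹ =
      (Real.Gamma (a + 2 + m + k))⁻¹ := by
    rw [show (a + 1 + (m : ℝ) + ((k : ℝ) + 1) : ℝ) = a + 2 + m + k by ring]
  have hC2 : (Real.Gamma (a + 1 + ((m : ℝ) + 1) + k))⁻¹ = (Real.Gamma (a + 2 + m + k))⁻¹ := by
    rw [show (a + 1 + ((m : ℝ) + 1) + k : ℝ) = a + 2 + m + k by ring]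
  simp only [tt, gg, mul_inv]
  push_cast
  rw [hsign, hA]
  rw [hP, hQ, hQ1, hQ2, hR, hB, hB1, hC, hC1, hC2]
  ring

lemma key_base (a : ℝ) (ha : 0 < a) (l n : ℕ) :
    ∑ k ∈ Finset.range (l + 2), tt a l n n k =
      (Real.Gamma ((l : ℝ) + 1 - n) * Real.Gamma ((n : ℝ) + 1 - n) *
        Real.Gamma (a + 1 + l + n))⁻¹ := by
  rw [Finset.sum_eq_single n]
  · have e1 : Real.Gamma ((n : ℝ) + 1 - n) = 1 := by
      rw [show ((n : ℝ) + 1 - n) = 1 by ring, Real.Gamma_one]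
    have e2 : Real.Gamma (a + 1 + (n : ℝ) + n) = (a + n + n) * Real.Gamma (a + n + n) := by
      rw [show (a + 1 + (n : ℝ) + n) = (a + (n : ℝ) + n) + 1 by ring,
        Real.Gamma_add_one (by positivity)]
    have e3 : ((-1 : ℝ)) ^ (n + n) = 1 := Even.neg_one_pow ⟨n, rfl⟩
    have hA0 : Real.Gamma (a + (n : ℝ) + n) ≠ 0 :=
      (Real.Gamma_pos_of_pos (by positivity)).ne'
    have h2 : (a + (n : ℝ) + n) ≠ 0 := by positivity
    simp only [tt, e1, e2, e3, mul_inv, one_mul, mul_one]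
    linear_combination
      ((Real.Gamma ((l : ℝ) + 1 - n))⁻¹ * (Real.Gamma (a + 1 + (l : ℝ) + n))⁻¹ *
          Real.Gamma (a + (n : ℝ) + n) * (Real.Gamma (a + (n : ℝ) + n))⁻¹) *
        mul_inv_cancel₀ h2 +
      ((Real.Gamma ((l : ℝ) + 1 - n))⁻¹ * (Real.Gamma (a + 1 + (l : ℝ) + n))⁻¹) *
        mul_inv_cancel₀ hA0
  · intro b _ hb
    rcases lt_or_gt_of_ne hb with h | h
    · exact tt_zero_lt a l n h
    · exact tt_zero_right a l h
  · intro hn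
    have : l < n := by
      simp only [Finset.mem_range] at hn
      omega
    exact tt_zero_left a n n this

lemma key_lt (a : ℝ) (l m n : ℕ) (h : m < n) :
    ∑ k ∈ Finset.range (l + 2), tt a l m n k =
      (Real.Gamma ((l : ℝ) + 1 - n) * Real.Gamma ((m : ℝ) + 1 - n) *
        Real.Gamma (a + 1 + l + m))⁻¹ := by
  rw [Finset.sum_eq_zero, eq_comm]
  · simp [mul_inv, inv_gamma_nat_zero h]
  · intro k _
    rcases le_or_gt k m with hk | hk
    · exact tt_zero_lt a l m (lt_of_le_of_lt hk h)
    · exact tt_zero_right a l hk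

lemma key (a : ℝ) (ha : 0 < a) (l n : ℕ) : ∀ m : ℕ,
    ∑ k ∈ Finset.range (l + 2), tt a l m n k =
      (Real.Gamma ((l : ℝ) + 1 - n) * Real.Gamma ((m : ℝ) + 1 - n) *
        Real.Gamma (a + 1 + l + m))⁻¹ := by
  intro m
  induction m with
  | zero =>
      rcases Nat.eq_zero_or_pos n with h | h
      · subst h; exact key_base a ha l 0
      · exact key_lt a l 0 n h
  | succ m ih =>
      rcases lt_trichotomy (m + 1) n with h | h | h
      · exact key_lt a l (m + 1) n h
      · subst h; exact key_base a ha l (m + 1)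
      · -- n ≤ m
        have hnm : n ≤ m := by omega
        set c1 : ℝ := (m : ℝ) + 1 - n with hc1
        set c2 : ℝ := a + 1 + l + m with hc2
        have hc1pos : 0 < c1 := by
          have : (n : ℝ) ≤ m := by exact_mod_cast hnm
          rw [hc1]; linarith
        have hc2pos : 0 < c2 := by rw [hc2]; positivity
        have tel :
            ∑ k ∈ Finset.range (l + 2), (gg a l m n (k + 1) - gg a l m n k) =
              gg a l m n (l + 2) - gg a l m n 0 :=
          Finset.sum_range_sub (gg a l m n) (l + 2)
        have g0 : gg a l m n 0 = 0 := by
          simp only [gg]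
          rw [show ((↑(0 : ℕ) : ℝ) - ↑n) = -(↑n : ℝ) by push_cast; ring]
          simp [Real.Gamma_neg_nat_eq_zero, mul_inv]
        have gtop : gg a l m n (l + 2) = 0 := by
          simp only [gg]
          rw [show ((l : ℝ) + 1 - (↑(l + 2) : ℝ)) = -(1 : ℝ) by push_cast; ring]
          have hg1 : Real.Gamma (-1) = 0 := by
            rw [show (-1 : ℝ) = -((1 : ℕ) : ℝ) by norm_num]
            exact Real.Gamma_neg_nat_eq_zero 1
          simp [hg1, mul_inv]
        have hmain :
            c1 * c2 * (∑ k ∈ Finset.range (l + 2), tt a l (m + 1) n k) -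
              ∑ k ∈ Finset.range (l + 2), tt a l m n k = 0 := by
          rw [Finset.mul_sum, ← Finset.sum_sub_distrib]
          rw [show (0 : ℝ) = gg a l m n (l + 2) - gg a l m n 0 by rw [g0, gtop]; ring]
          rw [← tel]
          exact Finset.sum_congr rfl fun k _ => cert a ha l m n k
        have hS : ∑ k ∈ Finset.range (l + 2), tt a l (m + 1) n k =
            (c1 * c2)⁻¹ * ∑ k ∈ Finset.range (l + 2), tt a l m n k := by
          have hcc : c1 * c2 ≠ 0 := by positivity
          field_simp
          linarith [hmain]
        rw [hS, ih]
        have e1 : Real.Gamma ((↑(m + 1) : ℝ) + 1 - n) =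
            c1 * Real.Gamma ((m : ℝ) + 1 - n) := by
          rw [show ((↑(m + 1) : ℝ) + 1 - n) = ((m : ℝ) + 1 - n) + 1 by push_cast; ring,
            Real.Gamma_add_one hc1pos.ne', hc1]
        have e2 : Real.Gamma (a + 1 + l + (↑(m + 1) : ℝ)) =
            c2 * Real.Gamma (a + 1 + l + m) := by
          rw [show (a + 1 + l + (↑(m + 1) : ℝ)) = (a + 1 + l + (m : ℝ)) + 1 by push_cast; ring,
            Real.Gamma_add_one hc2pos.ne', hc2]
        rw [e1, e2]
        simp only [mul_inv]
        ring

/-- Saalschütz-type summation: the sum over `k1` (effectively finite, since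
`(Real.Gamma x)⁻¹ = 0` at nonpositive integers `x`, Mathlib's `Real.Gamma`
vanishing there) equals the stated closed form. -/
theorem stmt2 (M : ℕ) (hM : 3 ≤ M) (l m n σ : ℕ) (hσ : σ ≤ 1) :
    (∑' k1 : ℕ,
        (-1 : ℝ) ^ (k1 + n) * (2 * k1 + σ + (M : ℝ) / 2 - 1) *
            Real.Gamma ((M : ℝ) / 2) *
            Real.Gamma ((M : ℝ) / 2 - 1 + k1 + n + σ) *
          (Real.Gamma ((l : ℝ) + 1 - k1) * Real.Gamma ((m : ℝ) + 1 - k1) *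
              Real.Gamma ((k1 : ℝ) + 1 - n) *
              Real.Gamma ((M : ℝ) / 2 + l + k1 + σ) *
              Real.Gamma ((M : ℝ) / 2 + m + k1 + σ))⁻¹) =
      Real.Gamma ((M : ℝ) / 2) *
        (Real.Gamma ((l : ℝ) + 1 - n) * Real.Gamma ((m : ℝ) + 1 - n) *
            Real.Gamma ((M : ℝ) / 2 + l + m + σ))⁻¹ := by
  have ha : 0 < (M : ℝ) / 2 - 1 + (σ : ℝ) := by
    have h3 : (3 : ℝ) ≤ M := by exact_mod_cast hM
    have hs : (0 : ℝ) ≤ σ := Nat.cast_nonneg σ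
    linarith
  have hterm : ∀ k1 : ℕ,
      (-1 : ℝ) ^ (k1 + n) * (2 * k1 + σ + (M : ℝ) / 2 - 1) *
            Real.Gamma ((M : ℝ) / 2) *
            Real.Gamma ((M : ℝ) / 2 - 1 + k1 + n + σ) *
          (Real.Gamma ((l : ℝ) + 1 - k1) * Real.Gamma ((m : ℝ) + 1 - k1) *
              Real.Gamma ((k1 : ℝ) + 1 - n) *
              Real.Gamma ((M : ℝ) / 2 + l + k1 + σ) *
              Real.Gamma ((M : ℝ) / 2 + m + k1 + σ))⁻¹ =
        Real.Gamma ((M : ℝ) / 2) * tt ((M : ℝ) / 2 - 1 + σ) l m n k1 := by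
    intro k1
    simp only [tt]
    rw [show ((M : ℝ) / 2 - 1 + ↑k1 + ↑n + ↑σ) =
          ((M : ℝ) / 2 - 1 + ↑σ) + ↑k1 + ↑n by ring,
      show ((M : ℝ) / 2 + ↑l + ↑k1 + ↑σ) =
          ((M : ℝ) / 2 - 1 + ↑σ) + 1 + ↑l + ↑k1 by ring,
      show ((M : ℝ) / 2 + ↑m + ↑k1 + ↑σ) =
          ((M : ℝ) / 2 - 1 + ↑σ) + 1 + ↑m + ↑k1 by ring]
    ring
  rw [tsum_congr hterm, tsum_mul_left,
    tsum_eq_sum (s := Finset.range (l + 2))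
      (fun b hb => tt_zero_left _ m n (by simp only [Finset.mem_range] at hb; omega)),
    key _ ha l n m,
    show ((M : ℝ) / 2 + ↑l + ↑m + ↑σ) = ((M : ℝ) / 2 - 1 + ↑σ) + 1 + ↑l + ↑m by ring]
end
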